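/- Let f : [0,∞) → ℝ be such that f(0) = 1, f is non-negative, non-increasing, f ∈ W¹₁(0,∞) (f and its weak derivative are integrable), and ϱ ↦ ϱ f(ϱ) is integrable on (0,∞). Then for every ω ≠ 0 the sine transform f̂_s(ω) = ∫₀^∞ f(ϱ) sin(ϱω) dϱ satisfies f̂_s(ω)/ω > 0, and ∫₀^∞ ϱ f(ϱ) dϱ > 0. -/

import Mathlib

/-!
With `T = π / ω`, the identity `sin (u ω - π) = - sin (u ω)` moves each negative lobe of the
sine onto the preceding positive one:
`∫₀^∞ f(u) sin(u ω) du = ∫₀^∞ (f(u) - f(u + T)) (sin (u ω))⁺ du`.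
The new integrand is continuous and, as `f` is antitone, nonnegative; so the integral vanishes
only if `f(u + T) = f(u)` wherever `sin (u ω) > 0`. By continuity `f` would then be
`2T`-periodic and antitone, hence constant, contradicting `f(0) = 1` and integrability.
-/

open MeasureTheory Set Filter Real Topology

theorem setIntegral_pos_of_continuousOn_of_nonneg {X : Type*} [TopologicalSpace X]
    [MeasurableSpace X] [OpensMeasurableSpace X] {μ : Measure X} [μ.IsOpenPosMeasure]
    {g : X → ℝ} {U : Set X} {x : X} (hU : IsOpen U) (hg : ContinuousOn g U)
    (hint : IntegrableOn g U μ) (hnn : ∀ y ∈ U, 0 ≤ g y) (hx : x ∈ U) (hgx : g x ≠ 0) :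
    0 < ∫ y in U, g y ∂μ := by
  rw [setIntegral_pos_iff_support_of_nonneg_ae ((ae_restrict_iff' hU.measurableSet).2
    (.of_forall hnn)) hint, inter_comm]
  exact (hg.isOpen_inter_preimage hU isOpen_compl_singleton).measure_pos μ ⟨x, hx, hgx⟩

theorem continuousOn_Ici_of_eq_add_intervalIntegral {f f' : ℝ → ℝ} {a : ℝ}
    (hf' : IntegrableOn f' (Ioi a)) (h : ∀ x, a ≤ x → f x = f a + ∫ t in a..x, f' t) :
    ContinuousOn f (Ici a) := by
  have hprim := (hf'.integrable_indicator measurableSet_Ioi).continuous_primitive a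
  refine ((continuous_const (y := f a)).add hprim).continuousOn.congr fun x hx => ?_
  rw [h x hx]
  congr 1
  refine intervalIntegral.integral_congr_ae (.of_forall fun t ht => ?_)
  rw [uIoc_of_le hx] at ht
  exact (indicator_of_mem ht.1 f').symm

theorem exists_lt_of_integrableOn_Ioi {f : ℝ → ℝ} {a c : ℝ} (hf : IntegrableOn f (Ioi a))
    (hc : 0 < c) : ∃ x > a, f x < c := by
  by_contra! h
  have hconst : IntegrableOn (fun _ => c) (Ioi a) :=
    hf.mono' aestronglyMeasurable_const <| (ae_restrict_iff' measurableSet_Ioi).2 <|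
      .of_forall fun x hx => by rw [Real.norm_of_nonneg hc.le]; exact h x hx
  simp [integrableOn_const_iff, hc.ne'] at hconst

theorem integrableOn_Ioi_comp_add_right {f : ℝ → ℝ} {a c : ℝ} (hc : 0 ≤ c)
    (hf : IntegrableOn f (Ioi a)) : IntegrableOn (fun u => f (u + c)) (Ioi a) := by
  have := (measurePreserving_add_right volume c).integrableOn_comp_preimage
    (measurableEmbedding_addRight c) (f := f) (s := Ioi (a + c))
  rw [preimage_add_const_Ioi, add_sub_cancel_right] at this
  exact this.2 (hf.mono_set (Ioi_subset_Ioi (by linarith)))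

theorem MeasureTheory.IntegrableOn.mul_max_sin {g : ℝ → ℝ} {s : Set ℝ} (hg : IntegrableOn g s)
    (c ω : ℝ) : IntegrableOn (fun u => g u * max (sin ((u + c) * ω)) 0) s := by
  refine hg.mul_bdd (c := 1) (by fun_prop) (.of_forall fun u => ?_)
  rw [Real.norm_of_nonneg (le_max_right _ _)]
  exact max_le (sin_le_one _) zero_le_one

theorem integral_mul_sin_eq_integral_sub_mul_max_sin {f : ℝ → ℝ} {ω : ℝ} (hω : 0 < ω)
    (hf : IntegrableOn f (Ioi 0)) :
    ∫ u in Ioi 0, f u * sin (u * ω) =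
      ∫ u in Ioi 0, (f u - f (u + π / ω)) * max (sin (u * ω)) 0 := by
  set T := π / ω
  have hT : 0 < T := div_pos pi_pos hω
  have hTω : T * ω = π := div_mul_cancel₀ π hω.ne'
  have hsplit : ∀ u, f u * sin (u * ω) =
      f u * max (sin ((u + 0) * ω)) 0 - f u * max (sin ((u + -T) * ω)) 0 := by
    intro u
    rw [show (u + -T) * ω = u * ω - π by rw [← hTω]; ring, sin_sub_pi, add_zero,
      ← mul_sub, max_zero_sub_max_neg_zero_eq_self]
  have hshift : ∫ u in Ioi 0, f u * max (sin ((u + -T) * ω)) 0 =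
      ∫ u in Ioi 0, f (u + T) * max (sin ((u + 0) * ω)) 0 := by
    rw [setIntegral_eq_of_subset_of_forall_sdiff_eq_zero measurableSet_Ioi (Ioi_subset_Ioi hT.le)]
    · have := (measurePreserving_add_right volume T).setIntegral_preimage_emb
        (measurableEmbedding_addRight T) (fun u => f u * max (sin ((u + -T) * ω)) 0) (Ioi T)
      simpa [preimage_add_const_Ioi] using this.symm
    · rintro u ⟨hu0, huT⟩
      simp only [mem_Ioi, not_lt] at hu0 huT
      rw [max_eq_right, mul_zero]
      exact sin_nonpos_of_nonpos_of_neg_pi_le (by nlinarith) (by nlinarith)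
  simp only [hsplit]
  rw [integral_sub (hf.mul_max_sin 0 ω) (hf.mul_max_sin (-T) ω), hshift,
    ← integral_sub (hf.mul_max_sin 0 ω)
      ((integrableOn_Ioi_comp_add_right hT.le hf).mul_max_sin 0 ω)]
  simp only [add_zero, sub_mul]

theorem exists_sin_pos_and_lt_of_lt {f : ℝ → ℝ} {ω x : ℝ} (hω : 0 < ω)
    (hcont : ContinuousOn f (Ici 0)) (hmono : AntitoneOn f (Ici 0)) (hx : 0 ≤ x)
    (hfx : f x < f 0) : ∃ u > 0, 0 < sin (u * ω) ∧ f (u + π / ω) < f u := by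
  set T := π / ω
  have hT : 0 < T := div_pos pi_pos hω
  have hTω : T * ω = π := div_mul_cancel₀ π hω.ne'
  by_contra! h
  have hstep : ∀ n : ℕ, f (n * (2 * T)) ≤ f ((n + 1 : ℕ) * (2 * T)) := by
    intro n
    set A : ℝ := n * (2 * T)
    have hA : 0 ≤ A := by positivity
    have hle : ∀ u ∈ Ioo A (A + T), f u ≤ f (u + T) := by
      intro u hu
      refine h u (hA.trans_lt hu.1) ?_
      rw [show u * ω = (u - A) * ω + n * (2 * π) by rw [← hTω]; ring, sin_add_nat_mul_two_pi]
      exact sin_pos_of_pos_of_lt_pi (by nlinarith [hu.1]) (by nlinarith [hu.2])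
    have hf_cont : ContinuousOn f (Icc A (A + T)) := hcont.mono fun y hy => hA.trans hy.1
    have hf_shift_cont : ContinuousOn (fun y => f (y + T)) (Icc A (A + T)) :=
      hcont.comp (continuous_add_const T).continuousOn fun y hy =>
        show 0 ≤ y + T by linarith [hy.1]
    have hle_Icc : ∀ y ∈ Icc A (A + T), f y ≤ f (y + T) := fun y hy =>
      ContinuousWithinAt.closure_le (by rwa [closure_Ioo (by linarith)])
        ((hf_cont y hy).mono Ioo_subset_Icc_self)
        ((hf_shift_cont y hy).mono Ioo_subset_Icc_self) hle
    calc f A ≤ f (A + T) := hle_Icc A (left_mem_Icc.2 (by linarith))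
      _ ≤ f (A + T + T) := hle_Icc (A + T) (right_mem_Icc.2 (by linarith))
      _ = f ((n + 1 : ℕ) * (2 * T)) := by simp only [A]; push_cast; ring_nf
  obtain ⟨n, hn⟩ := exists_nat_ge (x / (2 * T))
  have hxn : x ≤ n * (2 * T) := (div_le_iff₀ (by positivity)).1 hn
  have hper : f 0 ≤ f (n * (2 * T)) := by
    simpa using monotone_nat_of_le_succ hstep (Nat.zero_le n)
  exact hfx.not_ge (hper.trans (hmono hx (hx.trans hxn) hxn))

theorem integral_mul_sin_pos {f : ℝ → ℝ} {ω : ℝ} (hω : 0 < ω) (hf0 : 0 < f 0)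
    (hcont : ContinuousOn f (Ici 0)) (hmono : AntitoneOn f (Ici 0))
    (hint : IntegrableOn f (Ioi 0)) : 0 < ∫ u in Ioi 0, f u * sin (u * ω) := by
  obtain ⟨x, hx, hfx⟩ := exists_lt_of_integrableOn_Ioi hint hf0
  obtain ⟨u, hu, hsin, hlt⟩ := exists_sin_pos_and_lt_of_lt hω hcont hmono hx.le hfx
  have hT : 0 ≤ π / ω := (div_pos pi_pos hω).le
  rw [integral_mul_sin_eq_integral_sub_mul_max_sin hω hint]
  refine setIntegral_pos_of_continuousOn_of_nonneg isOpen_Ioi ?_ ?_ ?_ hu ?_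
  · have hf : ContinuousOn f (Ioi 0) := hcont.mono Ioi_subset_Ici_self
    have hf_shift : ContinuousOn (fun y => f (y + π / ω)) (Ioi 0) :=
      hcont.comp (continuous_add_const _).continuousOn fun y (hy : 0 < y) =>
        show 0 ≤ y + π / ω by linarith
    exact (hf.sub hf_shift).mul (by fun_prop)
  · simpa using (hint.sub (integrableOn_Ioi_comp_add_right hT hint)).mul_max_sin 0 ω
  · intro y (hy : 0 < y)
    exact mul_nonneg (sub_nonneg.2 (hmono hy.le (by simp only [mem_Ici]; linarith)
      (by linarith))) (le_max_right _ _)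
  · exact (mul_pos (sub_pos.2 hlt) (lt_max_of_lt_left hsin)).ne'

/-- Lemma A.2: if f(0) = 1, f is non-negative and non-increasing on [0,∞), f ∈ W¹₁(0,∞)
(expressed as absolute continuity with integrable derivative), and ϱ f(ϱ) is integrable,
then the sine transform satisfies f̂_s(ω)/ω > 0 for all ω ≠ 0, and ∫₀^∞ ϱ f(ϱ) dϱ > 0. -/
theorem stmt6 (f : ℝ → ℝ) (hf0 : f 0 = 1)
    (hnn : ∀ x, 0 ≤ x → 0 ≤ f x)
    (hmono : AntitoneOn f (Set.Ici 0))
    (hint : IntegrableOn f (Set.Ioi 0))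
    (hW : ∃ f' : ℝ → ℝ, IntegrableOn f' (Set.Ioi 0) ∧
      ∀ x y : ℝ, 0 ≤ x → x ≤ y → f y - f x = ∫ t in x..y, f' t)
    (hrho : IntegrableOn (fun ϱ => ϱ * f ϱ) (Set.Ioi 0)) :
    (∀ ω : ℝ, ω ≠ 0 → 0 < (∫ ϱ in Set.Ioi (0:ℝ), f ϱ * Real.sin (ϱ * ω)) / ω) ∧
      0 < ∫ ϱ in Set.Ioi (0:ℝ), ϱ * f ϱ := by
  obtain ⟨f', hf', hFTC⟩ := hW
  have hcont : ContinuousOn f (Ici 0) := continuousOn_Ici_of_eq_add_intervalIntegral hf'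
    fun x hx => by linarith [hFTC 0 x le_rfl hx]
  have hsine : ∀ ω, 0 < ω → 0 < ∫ ϱ in Ioi 0, f ϱ * sin (ϱ * ω) := fun ω hω =>
    integral_mul_sin_pos hω (hf0 ▸ one_pos) hcont hmono hint
  refine ⟨fun ω hω => ?_, ?_⟩
  · rcases hω.lt_or_gt with hneg | hpos
    · have hodd : ∫ ϱ in Ioi 0, f ϱ * sin (ϱ * ω) = -∫ ϱ in Ioi 0, f ϱ * sin (ϱ * -ω) := by
        simp [mul_neg, sin_neg, integral_neg]
      rw [hodd, ← neg_div_neg_eq, neg_neg]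
      exact div_pos (hsine _ (neg_pos.2 hneg)) (neg_pos.2 hneg)
    · exact div_pos (hsine ω hpos) hpos
  · have hf_pos : ∀ᶠ x in 𝓝[>] 0, 0 < f x :=
      ((hcont 0 self_mem_Ici).mono Ioi_subset_Ici_self).tendsto.eventually
        (eventually_gt_nhds (by rw [hf0]; exact one_pos))
    obtain ⟨x, hfx, hx⟩ := (hf_pos.and self_mem_nhdsWithin).exists
    refine setIntegral_pos_of_continuousOn_of_nonneg isOpen_Ioi
      (continuousOn_id.mul (hcont.mono Ioi_subset_Ici_self)) hrho
      (fun y (hy : 0 < y) => mul_nonneg hy.le (hnn y hy.le)) hx (mul_pos hx hfx).ne'
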